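/- arXiv:1604.07349 — 4 statements merged into one kernel-verified Lean document; each statement's English description precedes it below -/
import Mathlib

section
/- Let $X$ be a standard Borel space and let $G$ be a locally finite analytic graph on $X$ (i.e., a symmetric irreflexive analytic subset of $X^2$ in which every vertex has finitely many neighbors). Then $G$ admits a Borel proper vertex coloring with countably many colors, i.e., there is a Borel function $f : X \to \mathbb{N}$ such that $f(x) \neq f(y)$ whenever $(x,y) \in G$. -/
open MeasureTheory Set Function PiNat

section Novikov

variable {α : Type*}

/-- A countable family of sets is Borel-separated if there are Borel supersets with
empty intersection. -/
def SepFam [MeasurableSpace α] (s : ℕ → Set α) : Prop :=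
  ∃ B : ℕ → Set α, (∀ n, s n ⊆ B n) ∧ (∀ n, MeasurableSet (B n)) ∧ (⋂ n, B n) = ∅

/-- Key combinatorial step of Novikov's separation theorem: if one member of the family
is covered by a countable union, and each replacement is separated, so is the family. -/
theorem sepFam_of_iUnion [MeasurableSpace α] {s : ℕ → Set α} {m : ℕ} {u : ℕ → Set α}
    (hcov : s m ⊆ ⋃ i, u i) (h : ∀ i, SepFam (Function.update s m (u i))) : SepFam s := by
  classical
  choose B hB1 hB2 hB3 using h
  refine ⟨fun n => if n = m then ⋃ i, B i m else ⋂ i, B i n, ?_, ?_, ?_⟩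
  · intro n
    by_cases hn : n = m
    · subst hn
      simp only [if_pos rfl]
      refine hcov.trans (iUnion_mono fun i => ?_)
      have := hB1 i n
      rwa [Function.update_self] at this
    · simp only [if_neg hn]
      refine subset_iInter fun i => ?_
      have := hB1 i n
      rwa [Function.update_of_ne hn] at this
  · intro n
    by_cases hn : n = m
    · simp only [if_pos hn]
      exact MeasurableSet.iUnion fun i => hB2 i m
    · simp only [if_neg hn]
      exact MeasurableSet.iInter fun i => hB2 i n
  · ext x
    simp only [mem_iInter, mem_empty_iff_false, iff_false]
    intro hx
    have hxm := hx m
    rw [if_pos rfl] at hxm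
    obtain ⟨i, hi⟩ := mem_iUnion.1 hxm
    have hxall : x ∈ ⋂ n, B i n := by
      refine mem_iInter.2 fun n => ?_
      by_cases hn : n = m
      · subst hn; exact hi
      · have := hx n
        rw [if_neg hn] at this
        exact mem_iInter.1 this i
    rw [hB3 i] at hxall
    exact hxall

/-- **Novikov's separation theorem**: countably many analytic sets with empty intersection
can be enlarged to Borel sets with empty intersection. -/
theorem sepFam_of_analyticSet_of_iInter_eq_empty [TopologicalSpace α] [T2Space α]
    [MeasurableSpace α] [OpensMeasurableSpace α] {s : ℕ → Set α}
    (hs : ∀ n, AnalyticSet (s n)) (hempty : (⋂ n, s n) = ∅) : SepFam s := by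
  classical
  by_cases hne : ∃ n, s n = ∅
  · obtain ⟨n, hn⟩ := hne
    refine ⟨fun m => if m = n then ∅ else univ, fun m => ?_, fun m => ?_, ?_⟩
    · by_cases hm : m = n
      · subst hm; simp [hn]
      · simp [hm]
    · by_cases hm : m = n <;> simp [hm]
    · have h1 := iInter_subset (fun m => if m = n then (∅ : Set α) else univ) n
      simp only [if_pos rfl] at h1
      exact eq_empty_iff_forall_notMem.2 fun x hx => h1 hx
  push_neg at hne
  have hfe : ∀ n, ∃ f : (ℕ → ℕ) → α, Continuous f ∧ range f = s n := by
    intro n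
    have := hs n
    rw [AnalyticSet] at this
    rcases this with h | h
    · exact absurd h (hne n).ne_empty
    · exact h
  choose f hfc hfr using hfe
  by_contra hsep
  -- one-step refinement of the system of cylinders, keeping non-separability
  have step : ∀ (m : ℕ) (q : (ℕ → ℕ) × (ℕ → ℕ → ℕ)),
      ¬ SepFam (fun n => f n '' cylinder (q.2 n) (q.1 n)) → ∃ w : ℕ → ℕ,
      w ∈ cylinder (q.2 m) (q.1 m) ∧
      ¬ SepFam (fun n => f n '' cylinder ((Function.update q.2 m w) n)
          ((Function.update q.1 m (q.1 m + 1)) n)) := by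
    intro m q hq
    by_contra hcon
    push_neg at hcon
    apply hq
    refine sepFam_of_iUnion (m := m)
      (u := fun k => f m '' cylinder (update (q.2 m) (q.1 m) k) (q.1 m + 1)) ?_ ?_
    · rw [← image_iUnion, iUnion_cylinder_update (q.2 m) (q.1 m)]
    · intro k
      have hmem := update_mem_cylinder (q.2 m) (q.1 m) k
      have hk := hcon (update (q.2 m) (q.1 m) k) hmem
      have heq : (fun n => f n '' cylinder
            ((Function.update q.2 m (update (q.2 m) (q.1 m) k)) n)
            ((Function.update q.1 m (q.1 m + 1)) n))
          = Function.update (fun n => f n '' cylinder (q.2 n) (q.1 n)) m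
            (f m '' cylinder (update (q.2 m) (q.1 m) k) (q.1 m + 1)) := by
        funext n
        by_cases hn : n = m
        · subst hn; simp
        · simp [Function.update_of_ne hn]
      rwa [heq] at hk
  choose! w hw1 hw2 using step
  -- iterate, at stage t refining coordinate (unpair t).1
  let P : ℕ → (ℕ → ℕ) × (ℕ → ℕ → ℕ) := fun t => Nat.rec ((fun _ => 0), (fun _ _ => 0))
    (fun t ih => (Function.update ih.1 t.unpair.1 (ih.1 t.unpair.1 + 1),
                  Function.update ih.2 t.unpair.1 (w t.unpair.1 ih))) t
  have hP1s : ∀ t, (P (t + 1)).1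
      = Function.update (P t).1 t.unpair.1 ((P t).1 t.unpair.1 + 1) := fun t => rfl
  have hP2s : ∀ t, (P (t + 1)).2
      = Function.update (P t).2 t.unpair.1 (w t.unpair.1 (P t)) := fun t => rfl
  have hBad : ∀ t, ¬ SepFam (fun n => f n '' cylinder ((P t).2 n) ((P t).1 n)) := by
    intro t
    induction t with
    | zero =>
      have h0 : (fun n => f n '' cylinder ((P 0).2 n) ((P 0).1 n)) = s := by
        funext n
        show f n '' cylinder (fun _ => 0) 0 = s n
        rw [cylinder_zero, image_univ, hfr]
      rw [h0]
      exact hsep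
    | succ t ih =>
      exact hw2 t.unpair.1 (P t) ih
  have hLs_eq : ∀ t, (P (t + 1)).1 t.unpair.1 = (P t).1 t.unpair.1 + 1 := by
    intro t
    rw [hP1s, Function.update_self]
  have hLs_ne : ∀ t n, n ≠ t.unpair.1 → (P (t + 1)).1 n = (P t).1 n := by
    intro t n hn
    rw [hP1s, Function.update_of_ne hn]
  have hLmono : ∀ n, Monotone fun t => (P t).1 n := by
    intro n
    refine monotone_nat_of_le_succ fun t => ?_
    by_cases hn : n = t.unpair.1
    · subst hn; rw [hLs_eq]; exact Nat.le_succ _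
    · rw [hLs_ne t n hn]
  have hgrow : ∀ n k, k + 1 ≤ (P (Nat.pair n k + 1)).1 n := by
    intro n k
    induction k with
    | zero =>
      have h0 : (Nat.unpair (Nat.pair n 0)).1 = n := by rw [Nat.unpair_pair]
      have h1 := hLs_eq (Nat.pair n 0)
      rw [h0] at h1
      omega
    | succ k ih =>
      have h1 : Nat.pair n k + 1 ≤ Nat.pair n (k + 1) :=
        Nat.pair_lt_pair_right n (Nat.lt_succ_self k)
      have h2 : (P (Nat.pair n k + 1)).1 n ≤ (P (Nat.pair n (k + 1))).1 n := hLmono n h1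
      have h0 : (Nat.unpair (Nat.pair n (k + 1))).1 = n := by rw [Nat.unpair_pair]
      have h3 := hLs_eq (Nat.pair n (k + 1))
      rw [h0] at h3
      omega
  have hLunb : ∀ n N, ∃ t, N ≤ (P t).1 n := fun n N =>
    ⟨Nat.pair n N + 1, le_trans (Nat.le_succ N) (hgrow n N)⟩
  -- stability of approximation points below the current length
  have hstab : ∀ n i t t', t ≤ t' → i < (P t).1 n → (P t').2 n i = (P t).2 n i := by
    intro n i t t' htt' hi
    induction t', htt' using Nat.le_induction with
    | base => rfl
    | succ t' ht' ih =>
      by_cases hc : n = t'.unpair.1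
      · have hmem := hw1 t'.unpair.1 (P t') (hBad t')
        have hi' : i < (P t').1 n := lt_of_lt_of_le hi (hLmono n ht')
        calc (P (t' + 1)).2 n i = w t'.unpair.1 (P t') i := by
              rw [hP2s, hc, Function.update_self]
          _ = (P t').2 n i := by rw [hc]; exact hmem i (hc ▸ hi')
          _ = (P t).2 n i := ih
      · rw [hP2s, Function.update_of_ne hc]
        exact ih
  -- limit points
  let x : ℕ → ℕ → ℕ := fun n i => (P (Nat.pair n i + 1)).2 n i
  have hx_eq : ∀ t n i, i < (P t).1 n → x n i = (P t).2 n i := by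
    intro t n i hi
    have h1 : i < (P (Nat.pair n i + 1)).1 n :=
      lt_of_lt_of_le (Nat.lt_succ_self i) (hgrow n i)
    have e1 : (P (max t (Nat.pair n i + 1))).2 n i = (P (Nat.pair n i + 1)).2 n i :=
      hstab n i (Nat.pair n i + 1) _ (le_max_right _ _) h1
    have e2 : (P (max t (Nat.pair n i + 1))).2 n i = (P t).2 n i :=
      hstab n i t _ (le_max_left _ _) hi
    show (P (Nat.pair n i + 1)).2 n i = (P t).2 n i
    rw [← e1, e2]
  -- cylinders around the limit points are never separated
  have hBadx : ∀ t, ¬ SepFam (fun n => f n '' cylinder (x n) ((P t).1 n)) := by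
    intro t h
    apply hBad t
    have heq : (fun n => f n '' cylinder ((P t).2 n) ((P t).1 n))
        = fun n => f n '' cylinder (x n) ((P t).1 n) := by
      funext n
      have hmem : x n ∈ cylinder ((P t).2 n) ((P t).1 n) := fun i hi => hx_eq t n i hi
      rw [← mem_cylinder_iff_eq.1 hmem]
    rw [heq]
    exact h
  -- all the limit values agree
  have hall : ∀ n, f n (x n) = f 0 (x 0) := by
    intro n
    by_contra hne2
    have hn0 : n ≠ 0 := by rintro rfl; exact hne2 rfl
    obtain ⟨u, v, u_open, v_open, hu, hv, huv⟩ := t2_separation hne2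
    letI : MetricSpace (ℕ → ℕ) := PiNat.metricSpaceNatNat
    obtain ⟨ε₁, ε₁pos, hε₁⟩ : ∃ ε₁ : ℝ, ε₁ > 0 ∧ Metric.ball (x n) ε₁ ⊆ f n ⁻¹' u := by
      apply Metric.mem_nhds_iff.1
      exact (hfc n).continuousAt.preimage_mem_nhds (u_open.mem_nhds hu)
    obtain ⟨ε₂, ε₂pos, hε₂⟩ : ∃ ε₂ : ℝ, ε₂ > 0 ∧ Metric.ball (x 0) ε₂ ⊆ f 0 ⁻¹' v := by
      apply Metric.mem_nhds_iff.1
      exact (hfc 0).continuousAt.preimage_mem_nhds (v_open.mem_nhds hv)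
    obtain ⟨N, hN⟩ : ∃ N : ℕ, (1 / 2 : ℝ) ^ N < min ε₁ ε₂ :=
      exists_pow_lt_of_lt_one (lt_min ε₁pos ε₂pos) (by norm_num)
    obtain ⟨t₁, ht₁⟩ := hLunb n N
    obtain ⟨t₂, ht₂⟩ := hLunb 0 N
    have hTn : N ≤ (P (max t₁ t₂)).1 n := le_trans ht₁ (hLmono n (le_max_left _ _))
    have hT0 : N ≤ (P (max t₁ t₂)).1 0 := le_trans ht₂ (hLmono 0 (le_max_right _ _))
    apply hBadx (max t₁ t₂)
    refine ⟨fun j => if j = n then u else if j = 0 then uᶜ else univ, ?_, ?_, ?_⟩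
    · intro j
      by_cases hj : j = n
      · subst hj
        simp only [if_pos rfl]
        rintro _ ⟨z, hz, rfl⟩
        apply hε₁
        have hz' : z ∈ cylinder (x j) N := cylinder_anti _ hTn hz
        have := mem_cylinder_iff_dist_le.1 hz'
        exact lt_of_le_of_lt this (lt_of_lt_of_le hN (min_le_left _ _))
      · by_cases hj0 : j = 0
        · subst hj0
          simp only [if_neg hj, if_pos rfl]
          rintro _ ⟨z, hz, rfl⟩
          have hz' : z ∈ cylinder (x 0) N := cylinder_anti _ hT0 hz
          have hdist := mem_cylinder_iff_dist_le.1 hz'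
          have hzv : f 0 z ∈ v :=
            hε₂ (lt_of_le_of_lt hdist (lt_of_lt_of_le hN (min_le_right _ _)))
          exact fun hzu => disjoint_left.1 huv hzu hzv
        · simp only [if_neg hj, if_neg hj0]
          exact subset_univ _
    · intro j
      by_cases hj : j = n
      · simp only [if_pos hj]; exact u_open.measurableSet
      · by_cases hj0 : j = 0
        · simp only [if_neg hj, if_pos hj0]
          exact u_open.measurableSet.compl
        · simp only [if_neg hj, if_neg hj0]
          exact MeasurableSet.univ
    · ext z
      simp only [mem_iInter, mem_empty_iff_false, iff_false]
      intro hz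
      have h1 := hz n
      rw [if_pos rfl] at h1
      have h2 := hz 0
      rw [if_neg (Ne.symm hn0), if_pos rfl] at h2
      exact h2 h1
  -- contradiction with empty intersection
  have hmem : f 0 (x 0) ∈ ⋂ n, s n := by
    refine mem_iInter.2 fun n => ?_
    rw [← hfr n, ← hall n]
    exact mem_range_self (x n)
  rw [hempty] at hmem
  exact hmem

end Novikov

/-- Every locally finite analytic graph on a Polish (standard Borel) space admits a
Borel proper vertex coloring with countably many colors. -/
theorem borel_countable_coloring_of_locally_finite_analytic
    {X : Type*} [TopologicalSpace X] [PolishSpace X]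
    [MeasurableSpace X] [BorelSpace X]
    (G : Set (X × X))
    (hG : MeasureTheory.AnalyticSet G)
    (hsymm : ∀ x y : X, (x, y) ∈ G → (y, x) ∈ G)
    (hirrefl : ∀ x : X, (x, x) ∉ G)
    (hlf : ∀ x : X, {y : X | (x, y) ∈ G}.Finite) :
    ∃ f : X → ℕ, Measurable f ∧ ∀ x y : X, (x, y) ∈ G → f x ≠ f y := by
  classical
  -- a countable basis of open sets, enumerated by ℕ
  obtain ⟨b, b_count, -, b_basis⟩ := TopologicalSpace.exists_countable_basis X
  obtain ⟨e, he⟩ : ∃ e : ℕ → Set X, insert ∅ b = range e :=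
    (b_count.insert ∅).exists_eq_range (insert_nonempty _ _)
  have he_open : ∀ n, IsOpen (e n) := by
    intro n
    have : e n ∈ insert ∅ b := he ▸ mem_range_self n
    rcases this with h | h
    · rw [h]; exact isOpen_empty
    · exact b_basis.isOpen h
  have he_basis : ∀ (x : X) (W : Set X), IsOpen W → x ∈ W → ∃ n, x ∈ e n ∧ e n ⊆ W := by
    intro x W hW hxW
    obtain ⟨v, hvb, hxv, hvW⟩ := b_basis.exists_subset_of_mem_open hxW hW
    have : v ∈ insert ∅ b := mem_insert_of_mem _ hvb
    rw [he] at this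
    obtain ⟨n, hn⟩ := this
    exact ⟨n, hn ▸ hxv, hn ▸ hvW⟩
  -- the analytic sets "has a neighbor in eₙ"
  set A : ℕ → Set X := fun n => Prod.fst '' (G ∩ univ ×ˢ e n) with hADef
  have hA_an : ∀ n, AnalyticSet (A n) := by
    intro n
    have h1 : AnalyticSet (univ ×ˢ e n : Set (X × X)) :=
      ((isOpen_univ.prod (he_open n)).measurableSet).analyticSet
    have h2 : AnalyticSet (G ∩ univ ×ˢ e n) := by
      rw [inter_eq_iInter]
      exact AnalyticSet.iInter fun b => by cases b <;> simpa
    exact h2.image_of_continuous continuous_fst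
  set S : ℕ → Set X := fun n => (e n)ᶜ ∪ A n with hSDef
  have hS_an : ∀ n, AnalyticSet (S n) := by
    intro n
    rw [hSDef]
    simp only
    rw [union_eq_iUnion]
    refine AnalyticSet.iUnion fun c => ?_
    cases c
    · simpa using hA_an n
    · simpa using ((he_open n).isClosed_compl.measurableSet).analyticSet
  have hS_empty : (⋂ n, S n) = ∅ := by
    ext x
    simp only [mem_iInter, mem_empty_iff_false, iff_false]
    intro hx
    have hNfin := hlf x
    have hNc : IsClosed {y | (x, y) ∈ G} := hNfin.isClosed
    have hxN : x ∈ ({y | (x, y) ∈ G})ᶜ := hirrefl x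
    obtain ⟨n, hxn, hnsub⟩ := he_basis x _ hNc.isOpen_compl hxN
    rcases hx n with h | h
    · exact h hxn
    · obtain ⟨p, ⟨hpG, -, hpe⟩, hp1⟩ := h
      have hpG' : (x, p.2) ∈ G := by
        rw [← hp1]
        exact hpG
      exact hnsub hpe hpG'
  obtain ⟨B, hB_sub, hB_meas, hB_empty⟩ :=
    sepFam_of_analyticSet_of_iInter_eq_empty hS_an hS_empty
  have hex : ∀ x : X, ∃ n, x ∉ B n := by
    intro x
    by_contra hc
    push_neg at hc
    have : x ∈ ⋂ n, B n := mem_iInter.2 hc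
    rw [hB_empty] at this
    exact this
  refine ⟨fun x => Nat.find (hex x), ?_, ?_⟩
  · exact measurable_find hex fun k => (hB_meas k).compl
  · intro x y hxy hfeq
    have hfeq' : Nat.find (hex x) = Nat.find (hex y) := hfeq
    have hxn : x ∉ B (Nat.find (hex x)) := Nat.find_spec (hex x)
    have hyn : y ∉ B (Nat.find (hex x)) := by
      rw [hfeq']
      exact Nat.find_spec (hex y)
    set n := Nat.find (hex x) with hn
    have hye : y ∈ e n := by
      by_contra hye
      exact hyn (hB_sub n (Or.inl hye))
    have hxA : x ∈ A n := ⟨(x, y), ⟨hxy, trivial, hye⟩, rfl⟩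
    exact hxn (hB_sub n (Or.inr hxA))
end

section
/- Let $H$ be a $k$-uniform hypergraph on a finite vertex set $X$ such that every edge of $H$ intersects at most $d$ other edges. If $e(d+1) \leq 2^{k-1}$ (where $e$ is the base of the natural logarithm), then $H$ admits a proper 2-coloring: a map $f : X \to \{0,1\}$ such that no edge of $H$ is monochromatic. -/
/-!
A counting form of the symmetric Lovász Local Lemma. Let `avoiding A S` be the outcomes lying in
none of the events `A i`, `i ∈ S`. By strong induction on `S ⊆ H`,
`(d + 2) * #(A i ∩ avoiding A S) ≤ #(avoiding A S)`: split `S` into the at most `d` events `S₁`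
depending on `i` and the rest `S₂`. Independence gives
`#(A i ∩ avoiding A S₂) ≤ p * #(avoiding A S₂)`, while the induction hypothesis, applied to the
events of `S₁` one at a time, shows that adding `S₁` shrinks `avoiding A S₂` by a factor of at
least `((d + 1) / (d + 2)) ^ #S₁`; the two combine because `(1 + 1 / (d + 1)) ^ (d + 1) ≤ e`.

For the hypergraph the outcomes are the 2-colorings and `A e` is the set of colorings
monochromatic on `e`: among any set of colorings defined by the colors off `e`, a fraction
`p = 2 / 2 ^ k` is monochromatic on `e`.
-/

open Finset

lemma sdiff_union_ssubset {α : Type*} [DecidableEq α] {s t u : Finset α} (h : u ⊂ s ∩ t) :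
    s \ t ∪ u ⊂ s := by
  obtain ⟨x, hx, hxu⟩ := exists_of_ssubset h
  refine (ssubset_iff_of_subset (union_subset sdiff_subset (h.subset.trans inter_subset_left))).mpr
    ⟨x, (mem_inter.mp hx).1, ?_⟩
  simp [hxu, (mem_inter.mp hx).2]

section LocalLemma

variable {ι Ω : Type*} [Fintype Ω] [DecidableEq Ω] (A : ι → Finset Ω)

def avoiding (S : Finset ι) : Finset Ω := (S.biUnion A)ᶜ

variable {A}

@[simp]
lemma mem_avoiding {S : Finset ι} {ω : Ω} : ω ∈ avoiding A S ↔ ∀ i ∈ S, ω ∉ A i := by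
  simp [avoiding]

lemma avoiding_empty : avoiding A ∅ = univ := by
  simp [avoiding]

lemma avoiding_anti {S T : Finset ι} (h : S ⊆ T) : avoiding A T ⊆ avoiding A S :=
  compl_subset_compl.mpr (biUnion_subset_biUnion_of_subset_left A h)

lemma disjoint_avoiding_of_mem {i : ι} {S : Finset ι} (h : i ∈ S) :
    Disjoint (A i) (avoiding A S) :=
  disjoint_left.mpr fun _ hω hω' => mem_avoiding.mp hω' i h hω

variable [DecidableEq ι]

lemma avoiding_insert (i : ι) (S : Finset ι) :
    avoiding A (insert i S) = avoiding A S \ A i := by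
  ext ω
  simp [avoiding, and_comm]

lemma card_avoiding_insert_add_card_inter (i : ι) (S : Finset ι) :
    #(avoiding A (insert i S)) + #(A i ∩ avoiding A S) = #(avoiding A S) := by
  rw [avoiding_insert, inter_comm, card_sdiff_add_card_inter]

lemma mul_card_avoiding_le_mul_card_avoiding_insert {c : ℕ} {i : ι} {S : Finset ι}
    (h : (c + 1) * #(A i ∩ avoiding A S) ≤ #(avoiding A S)) :
    c * #(avoiding A S) ≤ (c + 1) * #(avoiding A (insert i S)) := by
  have := card_avoiding_insert_add_card_inter (A := A) i S
  nlinarith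

lemma pow_mul_card_avoiding_le_pow_mul_card_avoiding_union {c : ℕ} (S T : Finset ι)
    (h : ∀ T' ⊂ T, ∀ j ∈ T, (c + 1) * #(A j ∩ avoiding A (S ∪ T')) ≤ #(avoiding A (S ∪ T'))) :
    c ^ #T * #(avoiding A S) ≤ (c + 1) ^ #T * #(avoiding A (S ∪ T)) := by
  induction T using Finset.induction_on with
  | empty => simp
  | @insert j T hj ih =>
    have ih := ih fun T' hT' j' hj' =>
      h T' (hT'.trans_subset (subset_insert j T)) j' (mem_insert_of_mem hj')
    have step := mul_card_avoiding_le_mul_card_avoiding_insert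
      (h T (ssubset_insert hj) j (mem_insert_self j T))
    rw [card_insert_of_notMem hj, union_insert, pow_succ, pow_succ]
    calc c ^ #T * c * #(avoiding A S) = c * (c ^ #T * #(avoiding A S)) := by ring
      _ ≤ c * ((c + 1) ^ #T * #(avoiding A (S ∪ T))) := Nat.mul_le_mul_left c ih
      _ = (c + 1) ^ #T * (c * #(avoiding A (S ∪ T))) := by ring
      _ ≤ (c + 1) ^ #T * ((c + 1) * #(avoiding A (insert j (S ∪ T)))) :=
        Nat.mul_le_mul_left _ step
      _ = _ := by ring

lemma mul_add_two_pow_le_add_one_pow {p : ℝ} {d t : ℕ} (hp0 : 0 ≤ p)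
    (hp : Real.exp 1 * p * (d + 1) ≤ 1) (ht : t ≤ d) :
    p * (d + 2) ^ (t + 1) ≤ (d + 1) ^ t := by
  have hd : (0 : ℝ) < d + 1 := by positivity
  have hratio : (1 + ((d + 1 : ℕ) : ℝ)⁻¹) ^ (t + 1) ≤ Real.exp 1 :=
    (pow_le_pow_right₀ (le_add_of_nonneg_right (by positivity)) (by omega)).trans
      Real.one_add_inv_pow_le_exp
  have hsplit : (d : ℝ) + 2 = (1 + ((d + 1 : ℕ) : ℝ)⁻¹) * (d + 1) := by
    push_cast
    field_simp
    ring
  calc p * (d + 2) ^ (t + 1)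
      = p * ((1 + ((d + 1 : ℕ) : ℝ)⁻¹) ^ (t + 1) * (d + 1) * (d + 1) ^ t) := by
        rw [hsplit, mul_pow, pow_succ _ t]; ring
    _ ≤ p * (Real.exp 1 * (d + 1) * (d + 1) ^ t) := by gcongr
    _ = Real.exp 1 * p * (d + 1) * (d + 1) ^ t := by ring
    _ ≤ (d + 1) ^ t := by nlinarith [pow_pos hd t]

variable {H : Finset ι} {N : ι → Finset ι} {d : ℕ} {p : ℝ}

lemma add_two_mul_card_inter_avoiding_le (hN : ∀ i ∈ H, #(N i) ≤ d)
    (hindep : ∀ i ∈ H, ∀ S ⊆ H, i ∉ S → Disjoint S (N i) →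
      (#(A i ∩ avoiding A S) : ℝ) ≤ p * #(avoiding A S))
    (hp0 : 0 ≤ p) (hp : Real.exp 1 * p * (d + 1) ≤ 1) :
    ∀ S ⊆ H, ∀ i ∈ H, (d + 2) * #(A i ∩ avoiding A S) ≤ #(avoiding A S) := by
  intro S
  induction S using Finset.strongInduction with | H S ih => ?_
  intro hSH i hi
  by_cases hiS : i ∈ S
  · simp [disjoint_iff_inter_eq_empty.mp (disjoint_avoiding_of_mem (A := A) hiS)]
  set S₁ := S ∩ N i
  set S₂ := S \ N i
  have hchain := pow_mul_card_avoiding_le_pow_mul_card_avoiding_union (A := A) (c := d + 1) S₂ S₁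
    fun T' hT' j hj => ih _ (sdiff_union_ssubset hT') ((sdiff_union_ssubset hT').subset.trans hSH)
      j (hSH (mem_inter.mp hj).1)
  rw [sdiff_union_inter] at hchain
  have hS₂ := hindep i hi S₂ (sdiff_subset.trans hSH) (fun h => hiS (mem_sdiff.mp h).1)
    sdiff_disjoint
  have hmono : #(A i ∩ avoiding A S) ≤ #(A i ∩ avoiding A S₂) :=
    card_le_card (inter_subset_inter_left (avoiding_anti sdiff_subset))
  have hnum := mul_add_two_pow_le_add_one_pow hp0 hp
    ((card_le_card inter_subset_right).trans (hN i hi) : #S₁ ≤ d)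
  set t := #S₁
  have key : ((d : ℝ) + 2) ^ t * ((d + 2) * #(A i ∩ avoiding A S)) ≤
      ((d : ℝ) + 2) ^ t * #(avoiding A S) := by
    have hchainℝ : ((d : ℝ) + 1) ^ t * #(avoiding A S₂) ≤ ((d : ℝ) + 2) ^ t * #(avoiding A S) :=
      by exact_mod_cast hchain
    calc ((d : ℝ) + 2) ^ t * ((d + 2) * #(A i ∩ avoiding A S))
        = (d + 2) ^ (t + 1) * #(A i ∩ avoiding A S) := by ring
      _ ≤ (d + 2) ^ (t + 1) * #(A i ∩ avoiding A S₂) := by gcongr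
      _ ≤ (d + 2) ^ (t + 1) * (p * #(avoiding A S₂)) := by gcongr
      _ = p * (d + 2) ^ (t + 1) * #(avoiding A S₂) := by ring
      _ ≤ (d + 1) ^ t * #(avoiding A S₂) := by gcongr
      _ ≤ _ := hchainℝ
  exact_mod_cast le_of_mul_le_mul_left key (by positivity)

theorem exists_forall_notMem_of_symmetric_local_lemma [Nonempty Ω] (hN : ∀ i ∈ H, #(N i) ≤ d)
    (hindep : ∀ i ∈ H, ∀ S ⊆ H, i ∉ S → Disjoint S (N i) →
      (#(A i ∩ avoiding A S) : ℝ) ≤ p * #(avoiding A S))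
    (hp0 : 0 ≤ p) (hp : Real.exp 1 * p * (d + 1) ≤ 1) :
    ∃ ω, ∀ i ∈ H, ω ∉ A i := by
  have hinv := add_two_mul_card_inter_avoiding_le hN hindep hp0 hp
  have hchain := pow_mul_card_avoiding_le_pow_mul_card_avoiding_union (A := A) (c := d + 1) ∅ H
    fun T' hT' j hj => by simpa using hinv T' hT'.subset j hj
  rw [empty_union, avoiding_empty, card_univ] at hchain
  have hpos : 0 < (d + 1 + 1) ^ #H * #(avoiding A H) :=
    (Nat.mul_pos (by positivity) Fintype.card_pos).trans_le hchain
  obtain ⟨ω, hω⟩ := card_pos.mp (pos_of_mul_pos_right hpos (Nat.zero_le _))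
  exact ⟨ω, mem_avoiding.mp hω⟩

end LocalLemma

section Coloring

variable {X : Type*} [Fintype X] [DecidableEq X]

def monochromatic (e : Finset X) : Finset (X → Bool) :=
  univ.filter fun f => ∃ b, ∀ x ∈ e, f x = b

lemma notMem_monochromatic_iff {e : Finset X} {f : X → Bool} :
    f ∉ monochromatic e ↔ (∃ x ∈ e, f x = true) ∧ (∃ x ∈ e, f x = false) := by
  simp only [monochromatic, mem_filter, mem_univ, true_and, not_exists, not_forall]
  constructor
  · intro h
    obtain ⟨x, hx, hfx⟩ := h false
    obtain ⟨y, hy, hfy⟩ := h true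
    exact ⟨⟨x, hx, by simpa using hfx⟩, ⟨y, hy, by simpa using hfy⟩⟩
  · rintro ⟨⟨x, hx, hfx⟩, ⟨y, hy, hfy⟩⟩ (_ | _)
    · exact ⟨x, hx, by simp [hfx]⟩
    · exact ⟨y, hy, by simp [hfy]⟩

lemma mem_monochromatic_congr {e : Finset X} {f g : X → Bool} (h : ∀ x ∈ e, f x = g x) :
    f ∈ monochromatic e ↔ g ∈ monochromatic e := by
  simp +contextual only [monochromatic, mem_filter, mem_univ, true_and, ← h]

lemma card_filter_const_eq_two (α : Type*) [Fintype α] [DecidableEq α] [Nonempty α] :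
    #(univ.filter fun g : α → Bool => ∃ b, ∀ x, g x = b) = 2 := by
  have : univ.filter (fun g : α → Bool => ∃ b, ∀ x, g x = b) = univ.image (Function.const α) := by
    ext g
    simp only [mem_filter, mem_univ, true_and, mem_image, funext_iff, Function.const_apply]
    exact ⟨fun ⟨b, hb⟩ => ⟨b, fun x => (hb x).symm⟩, fun ⟨b, hb⟩ => ⟨b, fun x => (hb x).symm⟩⟩
  rw [this, card_image_of_injective _ Function.const_injective, card_univ, Fintype.card_bool]

lemma two_pow_card_mul_card_monochromatic_inter {e : Finset X} (he : e.Nonempty)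
    {s : Finset (X → Bool)} (hs : ∀ f g : X → Bool, (∀ x ∉ e, f x = g x) → f ∈ s → g ∈ s) :
    2 ^ #e * #(monochromatic e ∩ s) = 2 * #s := by
  let E := Equiv.piEquivPiSubtypeProd (· ∈ e) fun _ => Bool
  let Q : Finset ({x // x ∉ e} → Bool) := s.image fun f => (E f).2
  have hQ : ∀ f, f ∈ s ↔ (E f).2 ∈ Q := by
    refine fun f => ⟨fun hf => mem_image_of_mem _ hf, fun hf => ?_⟩
    obtain ⟨g, hg, hgf⟩ := mem_image.mp hf
    exact hs g f (fun x hx => congrFun hgf ⟨x, hx⟩) hg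
  have hs_card : #s = #(univ ×ˢ Q) := card_equiv E fun f => by simp [hQ f]
  have hmono_card : #(monochromatic e ∩ s) =
      #((univ.filter fun g : {x // x ∈ e} → Bool => ∃ b, ∀ x, g x = b) ×ˢ Q) :=
    card_equiv E fun f => by simp [monochromatic, hQ f, E]
  have : Nonempty {x // x ∈ e} := he.coe_sort
  rw [hs_card, hmono_card, card_product, card_product, card_filter_const_eq_two, card_univ,
    Fintype.card_fun, Fintype.card_bool, Fintype.card_coe]
  ring

lemma two_pow_card_mul_card_monochromatic_inter_avoiding {e : Finset X} (he : e.Nonempty)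
    {S : Finset (Finset X)} (hS : ∀ e' ∈ S, Disjoint e' e) :
    2 ^ #e * #(monochromatic e ∩ avoiding monochromatic S) =
      2 * #(avoiding monochromatic S) := by
  refine two_pow_card_mul_card_monochromatic_inter he fun f g hfg hf => ?_
  simp only [mem_avoiding] at hf ⊢
  refine fun e' he' => (mem_monochromatic_congr fun x hx => ?_).not.mp (hf e' he')
  exact hfg x (disjoint_left.mp (hS e' he') hx)

end Coloring

/-- Erdős–Lovász: a `k`-uniform hypergraph on a finite vertex set in which every edge
intersects at most `d` other edges is 2-colorable provided `e(d+1) ≤ 2^(k-1)`. -/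
theorem hypergraph_two_coloring_of_LLL
    {X : Type*} [Fintype X] [DecidableEq X]
    (k d : ℕ) (H : Finset (Finset X))
    (hk : ∀ e ∈ H, e.card = k)
    (hd : ∀ e ∈ H, (H.filter (fun e' => e' ≠ e ∧ (e' ∩ e).Nonempty)).card ≤ d)
    (hcond : Real.exp 1 * ((d : ℝ) + 1) ≤ (2 : ℝ) ^ (k - 1)) :
    ∃ f : X → Bool, ∀ e ∈ H, (∃ x ∈ e, f x = true) ∧ (∃ x ∈ e, f x = false) := by
  have hk_pos : 0 < k := by
    by_contra! hk0
    rw [Nat.le_zero.mp hk0, Nat.zero_sub, pow_zero] at hcond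
    nlinarith [Real.add_one_le_exp 1, (d.cast_nonneg : (0 : ℝ) ≤ d)]
  have hp : Real.exp 1 * (2 / 2 ^ k) * (d + 1) ≤ 1 := by
    rw [← Nat.sub_add_cancel hk_pos, pow_succ]
    field_simp
    linarith
  have hindep : ∀ e ∈ H, ∀ S ⊆ H, e ∉ S →
      Disjoint S (H.filter fun e' => e' ≠ e ∧ (e' ∩ e).Nonempty) →
      (#(monochromatic e ∩ avoiding monochromatic S) : ℝ) ≤
        2 / 2 ^ k * #(avoiding monochromatic S) := by
    intro e he S hSH heS hS
    have hdisj : ∀ e' ∈ S, Disjoint e' e := fun e' he' => by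
      by_contra h
      exact disjoint_left.mp hS he' (mem_filter.mpr
        ⟨hSH he', ne_of_mem_of_not_mem he' heS, not_disjoint_iff_nonempty_inter.mp h⟩)
    have hcount := two_pow_card_mul_card_monochromatic_inter_avoiding
      (card_pos.mp (hk e he ▸ hk_pos)) hdisj
    rw [hk e he] at hcount
    rw [div_mul_eq_mul_div, le_div_iff₀ (by positivity)]
    exact_mod_cast (mul_comm _ _).trans_le hcount.le
  obtain ⟨f, hf⟩ := exists_forall_notMem_of_symmetric_local_lemma hd hindep (by positivity) hp
  exact ⟨f, fun e he => notMem_monochromatic_iff.mp (hf e he)⟩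
end

section
/- Let $G$ be a locally finite graph on a set $X$, let $X' \subseteq X$, and let $f : X' \to \mathbb{N}$ be a proper coloring of $G|X'$. Suppose $f$ is good with parameter $\epsilon d$: for every $x \in X \setminus X'$ of degree at most $d$, the set of colors $i$ such that at least two neighbors $y \in G_x \cap X'$ have $f(y) = i$ has cardinality at least $\epsilon d$. Then $f$ extends to a proper coloring $f_\infty : X \to \mathbb{N}$ of $G$ such that $f_\infty(x) \leq (1-\epsilon)d$ for all $x \in X \setminus X'$. -/
/-- Greedy extension of a good partial coloring: if `G` has maximum degree at most `d`,
`f` is a proper coloring of `G` restricted to `X'`, and for every uncolored vertex at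
least `εd` colors are repeated among its colored neighbors, then `f` extends to a proper
coloring of all of `G` using only colors `≤ (1-ε)d` on `X \ X'`. -/
theorem good_partial_coloring_extends
    {X : Type*} (G : SimpleGraph X) (d : ℕ)
    (hdeg : ∀ x : X, (G.neighborSet x).Finite ∧ (G.neighborSet x).ncard ≤ d)
    (X' : Set X) (ε : ℝ) (hε0 : 0 ≤ ε) (hε1 : ε ≤ 1)
    (f : X → ℕ)
    (hproper : ∀ x ∈ X', ∀ y ∈ X', G.Adj x y → f x ≠ f y)
    (hgood : ∀ x ∉ X', ε * (d : ℝ) ≤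
      ({i : ℕ | ∃ y ∈ G.neighborSet x ∩ X', ∃ z ∈ G.neighborSet x ∩ X',
          y ≠ z ∧ f y = i ∧ f z = i}.ncard : ℝ)) :
    ∃ g : X → ℕ, (∀ x ∈ X', g x = f x) ∧ (∀ x y : X, G.Adj x y → g x ≠ g y) ∧
      ∀ x ∉ X', (g x : ℝ) ≤ (1 - ε) * (d : ℝ) := by
  classical
  let r : X → X → Prop := WellOrderingRel
  have wf : WellFounded r := IsWellFounded.wf
  let g : X → ℕ := wf.fix (fun x rec =>
    if x ∈ X' then f x else
    sInf {c : ℕ | (∀ y ∈ G.neighborSet x ∩ X', f y ≠ c) ∧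
      ∀ y, G.Adj x y → y ∉ X' → ∀ h : r y x, rec y h ≠ c})
  have hgeq : ∀ x, g x =
      if x ∈ X' then f x else
      sInf {c : ℕ | (∀ y ∈ G.neighborSet x ∩ X', f y ≠ c) ∧
        ∀ y, G.Adj x y → y ∉ X' → r y x → g y ≠ c} := by
    intro x
    show wf.fix _ x = _
    rw [wf.fix_eq]
  have hgX' : ∀ x ∈ X', g x = f x := by
    intro x hx; rw [hgeq, if_pos hx]
  -- the set of "already colored" neighbors and their colors
  set A : X → Set X := fun x => G.neighborSet x ∩ (X' ∪ {y | y ∉ X' ∧ r y x}) with hA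
  set S : X → Set ℕ := fun x => g '' A x with hS
  have hAfin : ∀ x, (A x).Finite := fun x => (hdeg x).1.subset Set.inter_subset_left
  have hSfin : ∀ x, (S x).Finite := fun x => (hAfin x).image g
  have hset : ∀ x, {c : ℕ | (∀ y ∈ G.neighborSet x ∩ X', f y ≠ c) ∧
        ∀ y, G.Adj x y → y ∉ X' → r y x → g y ≠ c} = (S x)ᶜ := by
    intro x
    ext c
    simp only [Set.mem_setOf_eq, Set.mem_compl_iff, hS, hA, Set.mem_image, not_exists]
    constructor
    · rintro ⟨h1, h2⟩ a ⟨⟨ha, ha'⟩, hac⟩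
      rcases ha' with ha' | ⟨ha1, ha2⟩
      · exact h1 a ⟨ha, ha'⟩ ((hgX' a ha').symm.trans hac)
      · exact h2 a ((G.mem_neighborSet x a).mp ha) ha1 ha2 hac
    · intro h
      refine ⟨fun y hy hyc => h y ⟨⟨hy.1, Or.inl hy.2⟩, (hgX' y hy.2).trans hyc⟩,
        fun y hy hy1 hy2 hyc => h y ⟨⟨hy, Or.inr ⟨hy1, hy2⟩⟩, hyc⟩⟩
  have hcompl_ne : ∀ x, ((S x)ᶜ).Nonempty := fun x => ((hSfin x).infinite_compl).nonempty
  have hgmem : ∀ x ∉ X', g x ∉ S x := by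
    intro x hx
    have := hgeq x
    rw [if_neg hx, hset x] at this
    rw [this]
    exact Nat.sInf_mem (hcompl_ne x)
  have hgle : ∀ x ∉ X', g x ≤ (S x).ncard := by
    intro x hx
    obtain ⟨c, hc1, hc2⟩ : ∃ c, c ≤ (S x).ncard ∧ c ∉ S x := by
      by_contra hcon
      push_neg at hcon
      have hsub : Finset.range ((S x).ncard + 1) ⊆ (hSfin x).toFinset := by
        intro c hc
        simp only [Finset.mem_range] at hc
        exact (hSfin x).mem_toFinset.2 (hcon c (Nat.lt_succ_iff.mp hc))
      have := Finset.card_le_card hsub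
      rw [Finset.card_range, Set.ncard_eq_toFinset_card _ (hSfin x)] at this
      omega
    have := hgeq x
    rw [if_neg hx, hset x] at this
    rw [this]
    exact le_trans (Nat.sInf_le hc2) hc1
  -- the counting bound
  have hcount : ∀ x ∉ X', ((S x).ncard : ℝ) ≤ (1 - ε) * d := by
    intro x hx
    set R : Set ℕ := {i : ℕ | ∃ y ∈ G.neighborSet x ∩ X', ∃ z ∈ G.neighborSet x ∩ X',
          y ≠ z ∧ f y = i ∧ f z = i} with hR
    have hRS : R ⊆ S x := by
      rintro i ⟨y, hy, z, hz, hyz, hfy, hfz⟩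
      exact ⟨y, ⟨hy.1, Or.inl hy.2⟩, (hgX' y hy.2).trans hfy⟩
    have hRfin : R.Finite := (hSfin x).subset hRS
    -- nat inequality: (S x).ncard + R.ncard ≤ d
    have hnat : (S x).ncard + R.ncard ≤ d := by
      set Af := (hAfin x).toFinset with hAf
      set Sf := Af.image g with hSf
      set Rf := hRfin.toFinset with hRf
      have hScard : (S x).ncard = Sf.card := by
        rw [Set.ncard_eq_toFinset_card _ (hSfin x)]
        congr 1
        rw [hSf, hAf]
        ext c
        simp [hS, Set.mem_image]
      have hRcard : R.ncard = Rf.card := Set.ncard_eq_toFinset_card _ hRfin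
      have hRsubS : Rf ⊆ Sf := by
        intro i hi
        have : i ∈ S x := hRS (hRfin.mem_toFinset.1 hi)
        obtain ⟨a, ha, hac⟩ := this
        exact Finset.mem_image.2 ⟨a, (hAfin x).mem_toFinset.2 ha, hac⟩
      have hfiber : Af.card = ∑ b ∈ Sf, (Af.filter fun a => g a = b).card :=
        Finset.card_eq_sum_card_fiberwise fun a ha => Finset.mem_image_of_mem g ha
      have hlow : ∀ b ∈ Sf, (if b ∈ Rf then 2 else 1) ≤ (Af.filter fun a => g a = b).card := by
        intro b hb
        by_cases hbR : b ∈ Rf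
        · simp only [if_pos hbR]
          obtain ⟨y, hy, z, hz, hyz, hfy, hfz⟩ := hRfin.mem_toFinset.1 hbR
          have hyA : y ∈ Af.filter fun a => g a = b := by
            refine Finset.mem_filter.2 ⟨(hAfin x).mem_toFinset.2 ⟨hy.1, Or.inl hy.2⟩, ?_⟩
            rw [hgX' y hy.2, hfy]
          have hzA : z ∈ Af.filter fun a => g a = b := by
            refine Finset.mem_filter.2 ⟨(hAfin x).mem_toFinset.2 ⟨hz.1, Or.inl hz.2⟩, ?_⟩
            rw [hgX' z hz.2, hfz]
          exact Finset.one_lt_card.2 ⟨y, hyA, z, hzA, hyz⟩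
        · simp only [if_neg hbR]
          obtain ⟨a, ha, hac⟩ := Finset.mem_image.1 hb
          exact Finset.card_pos.2 ⟨a, Finset.mem_filter.2 ⟨ha, hac⟩⟩
      have hsum : Sf.card + Rf.card ≤ Af.card := by
        rw [hfiber]
        calc Sf.card + Rf.card = ∑ b ∈ Sf, (if b ∈ Rf then 2 else 1) := by
              have h1 : ∑ b ∈ Sf, (if b ∈ Rf then 2 else 1)
                  = ∑ b ∈ Sf, ((if b ∈ Rf then 1 else 0) + 1) := by
                apply Finset.sum_congr rfl
                intro b _
                by_cases hbR : b ∈ Rf <;> simp [hbR]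
              rw [h1, Finset.sum_add_distrib, Finset.sum_const, smul_eq_mul, mul_one,
                Finset.sum_ite_mem, Finset.inter_eq_right.2 hRsubS, Finset.sum_const,
                smul_eq_mul, mul_one, add_comm]
          _ ≤ ∑ b ∈ Sf, (Af.filter fun a => g a = b).card := Finset.sum_le_sum hlow
      have hAd : Af.card ≤ d := by
        have hsub : Af ⊆ (hdeg x).1.toFinset := by
          intro a ha
          exact (hdeg x).1.mem_toFinset.2 ((hAfin x).mem_toFinset.1 ha).1
        calc Af.card ≤ (hdeg x).1.toFinset.card := Finset.card_le_card hsub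
          _ = (G.neighborSet x).ncard := (Set.ncard_eq_toFinset_card _ (hdeg x).1).symm
          _ ≤ d := (hdeg x).2
      rw [hScard, hRcard]
      omega
    have hgoodx := hgood x hx
    rw [← hR] at hgoodx
    have : ((S x).ncard : ℝ) + (R.ncard : ℝ) ≤ (d : ℝ) := by exact_mod_cast hnat
    nlinarith
  refine ⟨g, hgX', ?_, fun x hx => le_trans (by exact_mod_cast hgle x hx) (hcount x hx)⟩
  -- properness
  have key : ∀ x y, G.Adj x y → x ∉ X' → y ∈ A x → g x ≠ g y := by
    intro x y hadj hx hyA h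
    exact hgmem x hx ⟨y, hyA, h.symm⟩
  intro x y hadj
  by_cases hx : x ∈ X' <;> by_cases hy : y ∈ X'
  · rw [hgX' x hx, hgX' y hy]; exact hproper x hx y hy hadj
  · intro h
    exact key y x hadj.symm hy ⟨hadj.symm, Or.inl hx⟩ h.symm
  · exact key x y hadj hx ⟨hadj, Or.inl hy⟩
  · rcases trichotomous_of r x y with hr | hr | hr
    · intro h
      exact key y x hadj.symm hy ⟨hadj.symm, Or.inr ⟨hx, hr⟩⟩ h.symm
    · exact absurd hr (G.ne_of_adj hadj)
    · exact key x y hadj hx ⟨hadj, Or.inr ⟨hy, hr⟩⟩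
end

section
/- Let $\mathscr{P}$ be a neat pile (a finite set of functions $\tau : S_\tau \to \mathbb{N}$ with pairwise disjoint graphs, such that for every $\tau \in \mathscr{P}$ and $x \in \mathrm{dom}(\tau)$, either $\tau(x) = 0$ or some $\tau' \in \mathscr{P}$ has $x \in \mathrm{dom}(\tau')$ and $\tau'(x) = \tau(x)-1$; and the support relation $\prec$ has no cycles) with a unique top element. If $\tau, \tau_1, \tau_2 \in \mathscr{P}$ satisfy $\tau_1 \prec \tau$, $\tau_2 \prec \tau$, and $\mathrm{dom}(\tau_1) = \mathrm{dom}(\tau_2)$, then $\tau_1 = \tau_2$. -/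
/-- The support relation on a pile: `τ'` supports `τ` if there is a point `x` in both
domains with `τ' x = τ x - 1`. (Partial functions `X ⇀ ℕ` are modeled as
`X → Option ℕ`.) -/
def PileSupports {X : Type*} (P : Set (X → Option ℕ)) (τ' τ : X → Option ℕ) : Prop :=
  τ' ∈ P ∧ τ ∈ P ∧ ∃ (x : X) (k : ℕ), τ' x = some k ∧ τ x = some (k + 1)

/-- Downward chain: from an element with value `n` at `x`, any smaller value `a` at `x`
is attained by some element transitively supporting it. -/
lemma pile_chain {X : Type*} (P : Set (X → Option ℕ))
    (hdown : ∀ τ ∈ P, ∀ (x : X) (n : ℕ), τ x = some n →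
      n = 0 ∨ ∃ τ' ∈ P, τ' x = some (n - 1)) :
    ∀ n, ∀ σ ∈ P, ∀ (x : X), σ x = some n → ∀ a < n,
      ∃ σ' ∈ P, σ' x = some a ∧ Relation.TransGen (PileSupports P) σ' σ := by
  intro n
  induction n with
  | zero => intro σ hσ x hx a ha; omega
  | succ n ih =>
    intro σ hσ x hx a ha
    rcases hdown σ hσ x (n + 1) hx with h0 | ⟨σ'', hσ'', hval⟩
    · omega
    simp only [Nat.add_sub_cancel] at hval
    have hstep : PileSupports P σ'' σ := ⟨hσ'', hσ, x, n, hval, hx⟩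
    rcases Nat.lt_succ_iff_lt_or_eq.mp ha with h | h
    · obtain ⟨σ', h1, h2, h3⟩ := ih σ'' hσ'' x hval a h
      exact ⟨σ', h1, h2, h3.trans (Relation.TransGen.single hstep)⟩
    · exact ⟨σ'', hσ'', h ▸ hval, Relation.TransGen.single hstep⟩

/-- Half of the main argument: if `τ₁ ≺ τ`, `τ₂ ≺ τ`, `τ₁ ≠ τ₂`, and the domain of `τ₂`
contains the witnessing point of `τ₁ ≺ τ`, then `τ₂` transitively supports `τ₁`. -/
lemma pile_half {X : Type*} (P : Set (X → Option ℕ))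
    (hdisj : ∀ τ ∈ P, ∀ τ' ∈ P, τ ≠ τ' → ∀ (x : X) (k : ℕ), τ x = some k → τ' x ≠ some k)
    (hdown : ∀ τ ∈ P, ∀ (x : X) (n : ℕ), τ x = some n →
      n = 0 ∨ ∃ τ' ∈ P, τ' x = some (n - 1))
    (hneat : ∀ τ ∈ P, ¬ Relation.TransGen (PileSupports P) τ τ)
    (τ τ₁ τ₂ : X → Option ℕ) (hτ : τ ∈ P) (h1 : τ₁ ∈ P) (h2 : τ₂ ∈ P)
    (hp1 : PileSupports P τ₁ τ) (hp2 : PileSupports P τ₂ τ) (hne : τ₁ ≠ τ₂)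
    (hdom : {x : X | τ₁ x ≠ none} ⊆ {x : X | τ₂ x ≠ none}) :
    Relation.TransGen (PileSupports P) τ₂ τ₁ := by
  have same : ∀ σ ∈ P, ∀ σ' ∈ P, ∀ (x : X) (k : ℕ),
      σ x = some k → σ' x = some k → σ = σ' := by
    intro σ hσ σ' hσ' x k hk hk'
    by_contra hne'
    exact hdisj σ hσ σ' hσ' hne' x k hk hk'
  obtain ⟨-, -, x₁, k, hτ1x, hτx⟩ := hp1
  have hx1 : x₁ ∈ {x : X | τ₂ x ≠ none} := hdom (by simp [hτ1x])
  obtain ⟨m, hm⟩ : ∃ m, τ₂ x₁ = some m := by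
    cases h : τ₂ x₁ with
    | none => exact absurd h hx1
    | some m => exact ⟨m, rfl⟩
  have hmk : m ≠ k := fun h => hne (same τ₁ h1 τ₂ h2 x₁ k hτ1x (h ▸ hm))
  have hmk1 : m ≠ k + 1 := by
    intro h
    have : τ₂ = τ := same τ₂ h2 τ hτ x₁ (k + 1) (h ▸ hm) hτx
    exact hneat τ hτ (Relation.TransGen.single (this ▸ hp2))
  rcases lt_or_gt_of_ne hmk with hlt | hgt
  · -- m < k : chain from τ₁ down to value m at x₁ gives τ₂, so τ₂ ≺⁺ τ₁
    obtain ⟨σ', hσ', hσ'v, hσ't⟩ := pile_chain P hdown k τ₁ h1 x₁ hτ1x m hlt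
    have : σ' = τ₂ := same σ' hσ' τ₂ h2 x₁ m hσ'v hm
    exact this ▸ hσ't
  · -- m > k, m ≠ k+1, so m > k+1 : chain from τ₂ down to k+1 gives τ, cycle
    have hgt1 : k + 1 < m := by omega
    obtain ⟨σ', hσ', hσ'v, hσ't⟩ := pile_chain P hdown m τ₂ h2 x₁ hm (k + 1) hgt1
    have : σ' = τ := same σ' hσ' τ hτ x₁ (k + 1) hσ'v hτx
    exact absurd ((this ▸ hσ't).trans (Relation.TransGen.single hp2)) (hneat τ hτ)

/-- In a neat pile with a unique top element, two elements supporting the same element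
and having equal domains coincide. -/
theorem neat_pile_supports_unique_of_domain_eq
    {X : Type*} (P : Set (X → Option ℕ)) (hPfin : P.Finite)
    (hdomfin : ∀ τ ∈ P, {x : X | τ x ≠ none}.Finite)
    (hdisj : ∀ τ ∈ P, ∀ τ' ∈ P, τ ≠ τ' → ∀ (x : X) (k : ℕ), τ x = some k → τ' x ≠ some k)
    (hdown : ∀ τ ∈ P, ∀ (x : X) (n : ℕ), τ x = some n →
      n = 0 ∨ ∃ τ' ∈ P, τ' x = some (n - 1))
    (hneat : ∀ τ ∈ P, ¬ Relation.TransGen (PileSupports P) τ τ)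
    (htop : ∃! τ : X → Option ℕ, τ ∈ P ∧ ∀ τ' ∈ P, ¬ PileSupports P τ τ')
    (τ τ₁ τ₂ : X → Option ℕ) (hτ : τ ∈ P) (h1 : τ₁ ∈ P) (h2 : τ₂ ∈ P)
    (hp1 : PileSupports P τ₁ τ) (hp2 : PileSupports P τ₂ τ)
    (hdom : {x : X | τ₁ x ≠ none} = {x : X | τ₂ x ≠ none}) :
    τ₁ = τ₂ := by
  by_contra hne
  have h21 := pile_half P hdisj hdown hneat τ τ₁ τ₂ hτ h1 h2 hp1 hp2 hne hdom.subset
  have h12 := pile_half P hdisj hdown hneat τ τ₂ τ₁ hτ h2 h1 hp2 hp1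
    (Ne.symm hne) hdom.symm.subset
  exact hneat τ₁ h1 (h12.trans h21)
end
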